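/- Let ω be an increasing unbounded function such that liminf_{t→∞} ω(Ht)/ω(t) > 1 for some H > 0. If η₁, η₂ are increasing unbounded functions satisfying condition (α) (η_i(2t) = O(η_i(t))) and there exist L > 0, s₀ ≥ 0 with ω⁻¹(s/L)η₁⁻¹(s/L) ≤ ω⁻¹(s)η₂⁻¹(s) ≤ ω⁻¹(Ls)η₁⁻¹(Ls) for all s ≥ s₀ (and symmetrically), then η₁ ≍ η₂, i.e., η₁ = O(η₂) and η₂ = O(η₁). -/

import Mathlib

open Filter Asymptotics

/-! The liminf condition makes `ω` grow by a fixed factor `λ > 1` along the geometric sequence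
`H ^ n t`, so `L ω(t) ≤ ω(K t)` for large `t`, and hence `ω⁻¹(L s) ≤ K ω⁻¹(s)` for large `s`.
Substituting `s = L u` in the lower half of the sandwich and cancelling `ω⁻¹(u)` leaves
`η_a⁻¹(u) ≤ K η_b⁻¹(L u)`. At `u = η_a(2K t) + 1` the left side is at least `2K t`, so
`η_b(t) < L (η_a(2K t) + 1)`, and condition (α) bounds `η_a(2K t)` by a multiple of `η_a(t)`. -/

/-- Generalized inverse of an increasing function `f : [0,∞) → [0,∞)`:
f⁻¹(s) = inf{t ≥ 0 : f(t) ≥ s}. -/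
noncomputable def ginv (f : ℝ → ℝ) (s : ℝ) : ℝ := sInf {t : ℝ | 0 ≤ t ∧ s ≤ f t}

lemma exists_nonneg_forall_ge_of_eventually {p : ℝ → Prop} (h : ∀ᶠ t in atTop, p t) :
    ∃ T ≥ (0:ℝ), ∀ t ≥ T, p t := by
  obtain ⟨T, hT⟩ := eventually_atTop.1 h
  exact ⟨max T 0, le_max_right _ _, fun t ht => hT t (le_of_max_le_left ht)⟩

lemma map_pow_mul_le_pow_mul {g : ℝ → ℝ} {H A t₀ : ℝ} (hH : 1 ≤ H) (hA : 0 ≤ A) (ht₀ : 0 ≤ t₀)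
    (h : ∀ t ≥ t₀, g (H * t) ≤ A * g t) (n : ℕ) {t : ℝ} (ht : t₀ ≤ t) :
    g (H ^ n * t) ≤ A ^ n * g t := by
  induction n with
  | zero => simp
  | succ n ih =>
    have hHnt : t₀ ≤ H ^ n * t := ht.trans (le_mul_of_one_le_left (ht₀.trans ht) (one_le_pow₀ hH))
    calc g (H ^ (n + 1) * t) = g (H * (H ^ n * t)) := by rw [pow_succ', mul_assoc]
      _ ≤ A * g (H ^ n * t) := h _ hHnt
      _ ≤ A * (A ^ n * g t) := mul_le_mul_of_nonneg_left ih hA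
      _ = A ^ (n + 1) * g t := by ring

section ginv

variable {f : ℝ → ℝ} {r s t : ℝ}

lemma ginv_nonneg (f : ℝ → ℝ) (s : ℝ) : 0 ≤ ginv f s :=
  Real.sInf_nonneg fun _ ht => ht.1

lemma ginv_le (ht : 0 ≤ t) (hst : s ≤ f t) : ginv f s ≤ t :=
  csInf_le ⟨0, fun _ hx => hx.1⟩ ⟨ht, hst⟩

lemma lt_of_lt_ginv (ht : 0 ≤ t) (h : t < ginv f s) : f t < s :=
  lt_of_not_ge fun hst => (ginv_le ht hst).not_gt h

lemma le_ginv_of_forall (hf : Tendsto f atTop atTop) (h : ∀ t, 0 ≤ t → s ≤ f t → r ≤ t) :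
    r ≤ ginv f s := by
  obtain ⟨t, ht, hst⟩ := ((eventually_ge_atTop 0).and (hf.eventually_ge_atTop s)).exists
  exact le_csInf ⟨t, ht, hst⟩ fun t ht => h t ht.1 ht.2

lemma le_ginv (hfm : MonotoneOn f (Set.Ici 0)) (hf : Tendsto f atTop atTop) (hr : 0 ≤ r)
    (hs : f r < s) : r ≤ ginv f s :=
  le_ginv_of_forall hf fun _ ht hst =>
    le_of_not_gt fun htr => (hs.trans_le hst).not_ge (hfm ht hr htr.le)

lemma ginv_mul_le_mul_ginv {L K t₀ : ℝ} (hfm : MonotoneOn f (Set.Ici 0))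
    (hf : Tendsto f atTop atTop) (hL : 0 ≤ L) (hK : 0 < K) (ht₀ : 0 ≤ t₀)
    (hscale : ∀ t ≥ t₀, L * f t ≤ f (K * t)) (hs : f t₀ < s) :
    ginv f (L * s) ≤ K * ginv f s := by
  rw [← div_le_iff₀' hK]
  refine le_ginv_of_forall hf fun t ht hst => ?_
  have htt₀ : t₀ ≤ t := le_of_not_gt fun hlt => (hs.trans_le hst).not_ge (hfm ht ht₀ hlt.le)
  rw [div_le_iff₀' hK]
  exact ginv_le (by positivity) ((mul_le_mul_of_nonneg_left hst hL).trans (hscale t htt₀))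

end ginv

lemma exists_mul_le_map_mul_of_one_lt_liminf {ω : ℝ → ℝ} (hωm : MonotoneOn ω (Set.Ici 0))
    (hωt : Tendsto ω atTop atTop)
    (hliminf : ∃ H > (0:ℝ), 1 < liminf (fun t : ℝ => ω (H * t) / ω t) atTop) (L : ℝ) :
    ∃ K > (0:ℝ), ∃ t₀ ≥ (0:ℝ), ∀ t ≥ t₀, L * ω t ≤ ω (K * t) := by
  obtain ⟨H, hH, hlim⟩ := hliminf
  obtain ⟨lam, hlam1, hlam⟩ := exists_between hlim
  have hωHt : Tendsto (fun t => ω (H * t)) atTop atTop :=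
    hωt.comp (tendsto_id.const_mul_atTop hH)
  have hbdd : IsBoundedUnder (· ≥ ·) atTop fun t => ω (H * t) / ω t :=
    isBoundedUnder_of_eventually_ge (a := 0) <| by
      filter_upwards [hωHt.eventually_ge_atTop 0, hωt.eventually_ge_atTop 0] with t h1 h2
      exact div_nonneg h1 h2
  obtain ⟨t₀, ht₀, hgrowth⟩ : ∃ t₀ ≥ (0:ℝ), ∀ t ≥ t₀, lam * ω t ≤ ω (H * t) ∧ 0 < ω t :=
      exists_nonneg_forall_ge_of_eventually <| by
    filter_upwards [eventually_lt_of_lt_liminf hlam hbdd, hωt.eventually_gt_atTop 0]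
      with t hratio hpos
    exact ⟨(lt_div_iff₀ hpos).1 hratio |>.le, hpos⟩
  have hH1 : 1 ≤ H := by
    by_contra! hH1
    have hmono := hωm (mul_nonneg hH.le ht₀) ht₀ (mul_le_of_le_one_left ht₀ hH1.le)
    nlinarith [hgrowth t₀ le_rfl]
  obtain ⟨n, hn⟩ := pow_unbounded_of_one_lt L hlam1
  refine ⟨H ^ n, by positivity, t₀, ht₀, fun t ht => ?_⟩
  have hiter := map_pow_mul_le_pow_mul (g := fun t => -ω t) (A := lam) hH1 (by linarith) ht₀
    (fun t ht => by nlinarith [(hgrowth t ht).1]) n ht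
  have hpos := (hgrowth t ht).2
  calc L * ω t ≤ lam ^ n * ω t := mul_le_mul_of_nonneg_right hn.le hpos.le
    _ ≤ ω (H ^ n * t) := by linarith

lemma exists_ginv_le_mul_ginv {ω ηa ηb : ℝ → ℝ} {L s₀ : ℝ} (hωm : MonotoneOn ω (Set.Ici 0))
    (hωt : Tendsto ω atTop atTop)
    (hliminf : ∃ H > (0:ℝ), 1 < liminf (fun t : ℝ => ω (H * t) / ω t) atTop) (hL : 0 < L)
    (hsand : ∀ s ≥ s₀, ginv ω (s / L) * ginv ηa (s / L) ≤ ginv ω s * ginv ηb s) :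
    ∃ K > (0:ℝ), ∀ᶠ u in atTop, ginv ηa u ≤ K * ginv ηb (L * u) := by
  obtain ⟨K, hK, t₀, ht₀, hscale⟩ := exists_mul_le_map_mul_of_one_lt_liminf hωm hωt hliminf L
  refine ⟨K, hK, ?_⟩
  filter_upwards [eventually_gt_atTop (ω t₀), eventually_gt_atTop (ω 1),
    eventually_ge_atTop (s₀ / L)] with u hut₀ hu1 hus₀
  have hωu : 0 < ginv ω u := one_pos.trans_le (le_ginv hωm hωt zero_le_one hu1)
  have hlow := hsand (L * u) ((div_le_iff₀' hL).1 hus₀)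
  rw [mul_div_cancel_left₀ u hL.ne'] at hlow
  have hup := ginv_mul_le_mul_ginv hωm hωt hL.le hK ht₀ hscale hut₀
  refine le_of_mul_le_mul_left ?_ hωu
  calc ginv ω u * ginv ηa u ≤ ginv ω (L * u) * ginv ηb (L * u) := hlow
    _ ≤ K * ginv ω u * ginv ηb (L * u) := mul_le_mul_of_nonneg_right hup (ginv_nonneg _ _)
    _ = ginv ω u * (K * ginv ηb (L * u)) := by ring

lemma exists_map_mul_le_of_map_two_mul_le {η : ℝ → ℝ} (hηm : MonotoneOn η (Set.Ici 0))
    (hα : ∃ A > (0:ℝ), ∃ T ≥ (0:ℝ), ∀ t ≥ T, η (2 * t) ≤ A * η t) {K : ℝ} (hK : 0 ≤ K) :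
    ∃ C > (0:ℝ), ∀ᶠ t in atTop, η (K * t) ≤ C * η t := by
  obtain ⟨A, hA, T, hT, hαT⟩ := hα
  obtain ⟨m, hm⟩ := pow_unbounded_of_one_lt K one_lt_two
  refine ⟨A ^ m, by positivity, ?_⟩
  filter_upwards [eventually_ge_atTop T] with t ht
  have ht0 : 0 ≤ t := hT.trans ht
  calc η (K * t) ≤ η (2 ^ m * t) :=
        hηm (mul_nonneg hK ht0) (mul_nonneg (by positivity) ht0) (mul_le_mul_of_nonneg_right hm.le ht0)
    _ ≤ A ^ m * η t := map_pow_mul_le_pow_mul one_le_two hA.le hT hαT m ht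

lemma exists_le_mul_of_ginv_le_mul_ginv {ηa ηb : ℝ → ℝ} {K L : ℝ}
    (hηam : MonotoneOn ηa (Set.Ici 0)) (hηat : Tendsto ηa atTop atTop)
    (hα : ∃ A > (0:ℝ), ∃ T ≥ (0:ℝ), ∀ t ≥ T, ηa (2 * t) ≤ A * ηa t) (hK : 0 < K) (hL : 0 < L)
    (hinv : ∀ᶠ u in atTop, ginv ηa u ≤ K * ginv ηb (L * u)) :
    ∃ C > (0:ℝ), ∀ᶠ t in atTop, ηb t ≤ C * ηa t := by
  obtain ⟨C, hC, hdouble⟩ := exists_map_mul_le_of_map_two_mul_le hηam hα (K := 2 * K) (by positivity)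
  obtain ⟨u₁, hu₁⟩ := eventually_atTop.1 hinv
  refine ⟨L * (C + 1), by positivity, ?_⟩
  have hηa2K : Tendsto (fun t => ηa (2 * K * t)) atTop atTop :=
    hηat.comp (tendsto_id.const_mul_atTop (by positivity))
  filter_upwards [hdouble, eventually_gt_atTop 0, hηat.eventually_ge_atTop 1,
    hηa2K.eventually_ge_atTop u₁] with t hCt ht hηt hu
  set u := ηa (2 * K * t) + 1 with hu_def
  have h2Kt : 2 * K * t ≤ ginv ηa u := le_ginv hηam hηat (by positivity) (by linarith)
  have h2t : 2 * t ≤ ginv ηb (L * u) :=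
    le_of_mul_le_mul_left (by linarith [hu₁ u (by linarith)]) hK
  calc ηb t ≤ L * u := (lt_of_lt_ginv ht.le (by linarith)).le
    _ ≤ L * (C * ηa t + ηa t) := by gcongr; linarith
    _ = L * (C + 1) * ηa t := by ring

/-- if liminf ω(Ht)/ω(t) > 1 for some H > 0, η₁, η₂ satisfy
condition (α), and the products of generalized inverses are sandwiched
(in both directions), then η₁ ≍ η₂. -/
theorem stmt15 (ω η₁ η₂ : ℝ → ℝ)
    (hωm : MonotoneOn ω (Set.Ici 0)) (hωt : Tendsto ω atTop atTop)
    (hη₁m : MonotoneOn η₁ (Set.Ici 0)) (hη₁t : Tendsto η₁ atTop atTop)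
    (hη₂m : MonotoneOn η₂ (Set.Ici 0)) (hη₂t : Tendsto η₂ atTop atTop)
    (hliminf : ∃ H > (0:ℝ), 1 < Filter.liminf (fun t : ℝ => ω (H * t) / ω t) atTop)
    (hη₁α : ∃ A > (0:ℝ), ∃ T ≥ (0:ℝ), ∀ t ≥ T, η₁ (2 * t) ≤ A * η₁ t)
    (hη₂α : ∃ A > (0:ℝ), ∃ T ≥ (0:ℝ), ∀ t ≥ T, η₂ (2 * t) ≤ A * η₂ t)
    (hsand : ∃ L > (0:ℝ), ∃ s₀ ≥ (0:ℝ), ∀ s ≥ s₀,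
      (ginv ω (s / L) * ginv η₁ (s / L) ≤ ginv ω s * ginv η₂ s ∧
        ginv ω s * ginv η₂ s ≤ ginv ω (L * s) * ginv η₁ (L * s)) ∧
      (ginv ω (s / L) * ginv η₂ (s / L) ≤ ginv ω s * ginv η₁ s ∧
        ginv ω s * ginv η₁ s ≤ ginv ω (L * s) * ginv η₂ (L * s))) :
    ∃ C > (0:ℝ), ∃ T ≥ (0:ℝ), ∀ t ≥ T, η₁ t ≤ C * η₂ t ∧ η₂ t ≤ C * η₁ t := by
  obtain ⟨L, hL, s₀, -, hsand⟩ := hsand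
  obtain ⟨K₁, hK₁, hinv₁⟩ :=
    exists_ginv_le_mul_ginv hωm hωt hliminf hL fun s hs => (hsand s hs).1.1
  obtain ⟨K₂, hK₂, hinv₂⟩ :=
    exists_ginv_le_mul_ginv hωm hωt hliminf hL fun s hs => (hsand s hs).2.1
  obtain ⟨C₁, hC₁, h₂₁⟩ := exists_le_mul_of_ginv_le_mul_ginv hη₁m hη₁t hη₁α hK₁ hL hinv₁
  obtain ⟨C₂, hC₂, h₁₂⟩ := exists_le_mul_of_ginv_le_mul_ginv hη₂m hη₂t hη₂α hK₂ hL hinv₂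
  obtain ⟨T, hT, hall⟩ := exists_nonneg_forall_ge_of_eventually <|
    h₁₂.and <| h₂₁.and <| (hη₁t.eventually_ge_atTop 0).and (hη₂t.eventually_ge_atTop 0)
  refine ⟨max C₁ C₂, lt_max_of_lt_left hC₁, T, hT, fun t ht => ?_⟩
  obtain ⟨h12, h21, hη₁, hη₂⟩ := hall t ht
  exact ⟨h12.trans (by gcongr; exact le_max_right _ _),
    h21.trans (by gcongr; exact le_max_left _ _)⟩
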